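/- Let Q be an Osborn loop that also has the weak inverse property, i.e. x·(y·x)^ρ = y^ρ for all x,y ∈ Q. Then for every x ∈ Q, writing a = x^ρ·x, one has: x·a = (x^λ)^λ, a·x^λ = x^ρ, x^ρ·a = x^λ, and a·x = (x^ρ)^ρ. -/
import Mathlib


/-- A loop: a type with a binary operation `*` and identity `1` such that all
left and right translations are bijective (witnessed by the two division
operations `ldiv` (`x \ z`) and `rdiv` (`z / y`)). -/
class LoopStr (Q : Type*) extends Mul Q, One Q where
  one_mul : ∀ x : Q, 1 * x = x
  mul_one : ∀ x : Q, x * 1 = x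
  /-- `ldiv a b = a \ b`, the unique `y` with `a * y = b`. -/
  ldiv : Q → Q → Q
  /-- `rdiv b a = b / a`, the unique `x` with `x * a = b`. -/
  rdiv : Q → Q → Q
  mul_ldiv : ∀ a b : Q, a * ldiv a b = b
  ldiv_mul : ∀ a b : Q, ldiv a (a * b) = b
  rdiv_mul : ∀ a b : Q, rdiv a b * b = a
  mul_rdiv : ∀ a b : Q, rdiv (a * b) b = a

namespace LoopStr

variable {Q : Type*} [LoopStr Q]

/-- `x^λ`, the unique left inverse of `x` : `x^λ * x = 1`. -/
def lInv (x : Q) : Q := rdiv 1 x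

/-- `x^ρ`, the unique right inverse of `x` : `x * x^ρ = 1`. -/
def rInv (x : Q) : Q := ldiv x 1

/-- A loop is Osborn if `x * (((x^λ * y) * z) * x) = y * (z * x)` for all `x,y,z`. -/
def IsOsborn (Q : Type*) [LoopStr Q] : Prop :=
  ∀ x y z : Q, x * (((lInv x * y) * z) * x) = y * (z * x)

end LoopStr

open LoopStr

section Aux

variable {Q : Type*} [LoopStr Q]

theorem my_mul_left_cancel {x a b : Q} (h : x * a = x * b) : a = b := by
  have h1 := ldiv_mul x a
  rw [h, ldiv_mul] at h1; exact h1.symm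

theorem my_mul_right_cancel {x a b : Q} (h : a * x = b * x) : a = b := by
  have h1 := mul_rdiv a x
  rw [h, mul_rdiv] at h1; exact h1.symm

theorem my_eq_rInv {a b : Q} (h : a * b = 1) : b = rInv a := by
  have h1 := ldiv_mul a b; rw [h] at h1; exact h1.symm

theorem my_eq_lInv {a b : Q} (h : a * b = 1) : a = lInv b := by
  have h1 := mul_rdiv a b; rw [h] at h1; exact h1.symm

theorem my_lInv_mul (x : Q) : lInv x * x = 1 := rdiv_mul 1 x

theorem my_mul_rInv (x : Q) : x * rInv x = 1 := mul_ldiv x 1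

theorem my_rInv_lInv (x : Q) : rInv (lInv x) = x := (my_eq_rInv (my_lInv_mul x)).symm

theorem my_lInv_rInv (x : Q) : lInv (rInv x) = x := (my_eq_lInv (my_mul_rInv x)).symm

/-- (S): `(x^λ x^λ) x = x^ρ`. -/
theorem lemS (hos : IsOsborn Q) (x : Q) : (lInv x * lInv x) * x = rInv x := by
  have h0 := hos x (lInv x) 1
  rw [LoopStr.mul_one, LoopStr.one_mul, my_lInv_mul] at h0
  exact my_eq_rInv h0

/-- (T): `x^λ (x x) = x^λλ`. -/
theorem lemT (hos : IsOsborn Q) (x : Q) : lInv x * (x * x) = lInv (lInv x) := by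
  have h0 := hos x (x * x) (lInv x)
  rw [my_lInv_mul, LoopStr.mul_one] at h0
  have h1 := my_mul_left_cancel h0
  have h2 : (lInv x * (x * x)) * lInv x = 1 :=
    my_mul_right_cancel (x := x) (by rw [LoopStr.one_mul]; exact h1)
  exact my_eq_lInv h2

/-- Goal 1: `x (x^ρ x) = x^λλ`. -/
theorem lemG1 (hos : IsOsborn Q) (x : Q) : x * (rInv x * x) = lInv (lInv x) := by
  have h0 := hos x (lInv x) x
  rw [lemS hos x, lemT hos x] at h0
  exact h0

/-- Goal 2: `(x^ρ x) x^λ = x^ρ`. -/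
theorem lemG2 (hos : IsOsborn Q) (hwip : ∀ x y : Q, x * rInv (y * x) = rInv y) (x : Q) : (rInv x * x) * lInv x = rInv x := by
  have h0 := hwip (rInv x * x) x
  rw [lemG1 hos x, my_rInv_lInv] at h0
  exact h0

/-- (U): `x^ρ x = x^λ x^λλ`. -/
theorem lemU (hos : IsOsborn Q) (hwip : ∀ x y : Q, x * rInv (y * x) = rInv y) (x : Q) : rInv x * x = lInv x * lInv (lInv x) := by
  have h0 := hos x (ldiv (lInv x) (rInv x * x)) (lInv x)
  rw [mul_ldiv, my_lInv_mul, LoopStr.mul_one, lemG2 hos hwip x, lemG1 hos x] at h0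
  have h1 := mul_ldiv (lInv x) (rInv x * x)
  rw [← h0] at h1
  exact h1.symm

/-- (S'): `(x x) x^ρ = x^ρρ`. -/
theorem lemS' (hos : IsOsborn Q) (x : Q) : (x * x) * rInv x = rInv (rInv x) := by
  have h0 := lemS hos (rInv x)
  rwa [my_lInv_rInv] at h0

/-- (T'): `x (x^ρ x^ρ) = x^λ`. -/
theorem lemT' (hos : IsOsborn Q) (x : Q) : x * (rInv x * rInv x) = lInv x := by
  have h0 := lemT hos (rInv x)
  rwa [my_lInv_rInv] at h0

/-- (U'): `x^ρρ x^ρ = x x^λ`. -/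
theorem lemU' (hos : IsOsborn Q) (hwip : ∀ x y : Q, x * rInv (y * x) = rInv y) (x : Q) : rInv (rInv x) * rInv x = x * lInv x := by
  have h0 := lemU hos hwip (rInv x)
  rwa [my_lInv_rInv] at h0

/-- (N): `x^ρ (x x^λ) = x^λ`. -/
theorem lemN (hos : IsOsborn Q) (hwip : ∀ x y : Q, x * rInv (y * x) = rInv y) (x : Q) : rInv x * (x * lInv x) = lInv x := by
  have h0 := hos (rInv x) x (rInv x)
  rw [my_lInv_rInv, lemS' hos x, lemU' hos hwip x, lemT' hos x] at h0
  exact h0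

/-- (N'): `x^ρρ (x^ρ x) = x`. -/
theorem lemN' (hos : IsOsborn Q) (hwip : ∀ x y : Q, x * rInv (y * x) = rInv y) (x : Q) : rInv (rInv x) * (rInv x * x) = x := by
  have h0 := lemN hos hwip (rInv x)
  rwa [my_lInv_rInv] at h0

/-- (W4): `(x y)^λ = y^λ / x`. -/
theorem lemW4 (hwip : ∀ x y : Q, x * rInv (y * x) = rInv y) (x y : Q) : lInv (x * y) = rdiv (lInv y) x := by
  have hwx : rdiv (lInv y) x * x = lInv y := rdiv_mul _ _
  have h0 := hwip x (rdiv (lInv y) x)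
  rw [hwx, my_rInv_lInv] at h0
  have h1 : rdiv (lInv y) x * (x * y) = 1 := by
    rw [h0]; exact my_mul_rInv _
  exact (my_eq_lInv h1).symm

/-- (M2): `(x^ρ x)^λ = x^λ x^ρρ`. -/
theorem lemM2 (hos : IsOsborn Q) (hwip : ∀ x y : Q, x * rInv (y * x) = rInv y) (x : Q) : lInv (rInv x * x) = lInv x * rInv (rInv x) := by
  have h0 := lemW4 hwip (rInv (rInv x)) (rInv x * x)
  rw [lemN' hos hwip x] at h0
  have h1 := rdiv_mul (lInv (rInv x * x)) (rInv (rInv x))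
  rw [← h0] at h1
  exact h1.symm

/-- (S*): `x (x^λ x^λ) = x^λ`. -/
theorem lemSs (hos : IsOsborn Q) (hwip : ∀ x y : Q, x * rInv (y * x) = rInv y) (x : Q) : x * (lInv x * lInv x) = lInv x := by
  have h0 := hwip (lInv x * lInv x) x
  rw [← lemS hos x] at h0
  have h1 := my_mul_left_cancel h0
  have h2 := my_mul_rInv (x * (lInv x * lInv x))
  rw [h1] at h2
  exact my_eq_lInv h2

/-- `x^λ x^λ = x^ρ x^ρ`. -/
theorem lemSeq (hos : IsOsborn Q) (hwip : ∀ x y : Q, x * rInv (y * x) = rInv y) (x : Q) : lInv x * lInv x = rInv x * rInv x :=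
  my_mul_left_cancel (x := x) (by rw [lemSs hos hwip x, lemT' hos x])

/-- Goal 4: `(x^ρ x) x = x^ρρ`. -/
theorem lemG4 (hos : IsOsborn Q) (hwip : ∀ x y : Q, x * rInv (y * x) = rInv y) (x : Q) : (rInv x * x) * x = rInv (rInv x) := by
  have h0 := hos x (rInv (rInv x)) (rInv x * x)
  rw [← lemM2 hos hwip x, my_lInv_mul, LoopStr.one_mul] at h0
  have h1 : x * x = rInv (rInv x) * rInv (rInv x) := by
    have h2 := lemSeq hos hwip (rInv x)
    rwa [my_lInv_rInv] at h2
  rw [h1] at h0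
  exact (my_mul_left_cancel h0).symm

/-- Goal 3: `x^ρ (x^ρ x) = x^λ`. -/
theorem lemG3 (hos : IsOsborn Q) (hwip : ∀ x y : Q, x * rInv (y * x) = rInv y) (x : Q) : rInv x * (rInv x * x) = lInv x := by
  have h0 := hwip (rInv x * x) (rInv x)
  rw [← lemG4 hos hwip x] at h0
  have h1 := my_mul_left_cancel h0
  have h2 := my_mul_rInv (rInv x * (rInv x * x))
  rw [h1] at h2
  exact my_eq_lInv h2

end Aux

/-- in a WIP Osborn loop, with `a = x^ρ·x` one has
`x·a = (x^λ)^λ`, `a·x^λ = x^ρ`, `x^ρ·a = x^λ` and `a·x = (x^ρ)^ρ`. -/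
theorem stmt18 (Q : Type*) [LoopStr Q] (h : IsOsborn Q)
    (hwip : ∀ x y : Q, x * rInv (y * x) = rInv y) :
    ∀ x : Q, x * (rInv x * x) = lInv (lInv x) ∧
      (rInv x * x) * lInv x = rInv x ∧
      rInv x * (rInv x * x) = lInv x ∧
      (rInv x * x) * x = rInv (rInv x) := by
  exact fun x => ⟨lemG1 h x, lemG2 h hwip x, lemG3 h hwip x, lemG4 h hwip x⟩
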